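/- Let (S, σ) be a tree complex and define the face structure S* by S*_i = S_{i+1} ◁_{σ_i} S_i with codomain γ(p) = sup(lvs(p)°) and domain δ(p) = cvr(lvs(p)°) as in the duality construction. Then in S*, the relation <⁺ generated by γ and δ coincides with the constellation order <^co on S_{i+1} ◁ S_i. -/
import Mathlib


/-- The constellation order on `S₁ ⊔ S₀` (`inl` = inner nodes/circles from `S₁`,
`inr` = vertices/leaves from `S₀`), relative to a relation `r` on `S₁` and a
constellation map `σ : S₁ → St(S₀)`. -/
def coRel {α β : Type*} (r : α → α → Prop) (σ : α → Set β) : α ⊕ β → α ⊕ β → Prop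
  | Sum.inl s, Sum.inl t => r s t
  | Sum.inr s, Sum.inl t => s ∈ σ t
  | Sum.inr s, Sum.inr t => s = t
  | Sum.inl _, Sum.inr _ => False

/-- A tree complex: a sequence of trees `S i` (empty above the dimension `n`, singletons
in dimensions `0` and `n`) together with a sequence of constellations
`σ i : S (i+1) → St(S i)`. -/
structure TreeComplex where
  n : ℕ
  S : ℕ → Type
  le : ∀ i, S i → S i → Prop
  σ : ∀ i, S (i+1) → Set (S i)
  refl : ∀ i (x : S i), le i x x
  trans : ∀ i (x y z : S i), le i x y → le i y z → le i x z
  antisymm : ∀ i (x y : S i), le i x y → le i y x → x = y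
  fin : ∀ i, Finite (S i)
  nonemp : ∀ i, i ≤ n → Nonempty (S i)
  empty : ∀ i, n < i → IsEmpty (S i)
  sups : ∀ i, i ≤ n → ∀ a b : S i,
    ∃ c, le i a c ∧ le i b c ∧ ∀ d, le i a d → le i b d → le i c d
  comp : ∀ i (x a b : S i), le i x a → le i x b → le i a b ∨ le i b a
  zero_sub : ∀ a b : S 0, a = b
  top_sub : ∀ a b : S n, a = b
  σ_convex : ∀ i (p : S (i+1)),
    (∃ m ∈ σ i p, ∀ x ∈ σ i p, le i x m) ∧
    ∀ x ∈ σ i p, ∀ x' ∈ σ i p, ∀ s, le i x s → le i s x' → s ∈ σ i p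
  σ_mono : ∀ i (p q : S (i+1)), le (i+1) p q → σ i p ⊆ σ i q
  σ_top : ∀ i (m : S (i+1)), (∀ x, le (i+1) x m) → σ i m = Set.univ
  σ_comp : ∀ i (p q : S (i+1)), (σ i p ∩ σ i q).Nonempty →
    le (i+1) p q ∨ le (i+1) q p

namespace TreeComplex

variable (T : TreeComplex)

/-- The constellation order on `S*_i = S_{i+1} ◁ S_i`. -/
def coStar (i : ℕ) : (T.S (i+1) ⊕ T.S i) → (T.S (i+1) ⊕ T.S i) → Prop :=
  coRel (T.le (i+1)) (T.σ i)

/-- `lvs(p)°`: the set of leaves of `S*_{i+1}` below `p`, regarded as circles in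
`S*_i`. -/
def lvsC (i : ℕ) (p : T.S (i+2) ⊕ T.S (i+1)) : Set (T.S (i+1) ⊕ T.S i) :=
  {x | ∃ t : T.S (i+1), x = Sum.inl t ∧ T.coStar (i+1) (Sum.inr t) p}

/-- The immediate-predecessor (cover) relation of the constellation order on `S*_i`. -/
def covC (i : ℕ) (x y : T.S (i+1) ⊕ T.S i) : Prop :=
  T.coStar i x y ∧ x ≠ y ∧
    ∀ z, T.coStar i x z → T.coStar i z y → z = x ∨ z = y

/-- The domain `δ(p) = cvr(lvs(p)°)` in `S*_i`. -/
def δStar (i : ℕ) (p : T.S (i+2) ⊕ T.S (i+1)) : Set (T.S (i+1) ⊕ T.S i) :=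
  {s | s ∉ T.lvsC i p ∧ ∃ x ∈ T.lvsC i p, T.covC i s x}

/-- `g` is the codomain `γ(p) = sup(lvs(p)°)` of `p`: the least upper bound in
`(S*_i, ≤^co)` of the set `lvs(p)°`. -/
def IsGammaOf (i : ℕ) (p : T.S (i+2) ⊕ T.S (i+1)) (g : T.S (i+1) ⊕ T.S i) : Prop :=
  (∀ x ∈ T.lvsC i p, T.coStar i x g) ∧
    ∀ u, (∀ x ∈ T.lvsC i p, T.coStar i x u) → T.coStar i g u

section Aux

variable (T : TreeComplex) (i : ℕ)

lemma coStar_refl' (x : T.S (i+1) ⊕ T.S i) : T.coStar i x x := by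
  cases x with
  | inl s => exact T.refl _ s
  | inr s => exact rfl

lemma coStar_trans' {x y z : T.S (i+1) ⊕ T.S i}
    (h1 : T.coStar i x y) (h2 : T.coStar i y z) : T.coStar i x z := by
  cases x with
  | inl a =>
    cases y with
    | inl b =>
      cases z with
      | inl c => exact T.trans _ a b c h1 h2
      | inr c => exact absurd h2 id
    | inr b => exact absurd h1 id
  | inr a =>
    cases y with
    | inl b =>
      cases z with
      | inl c => exact T.σ_mono i b c h2 h1
      | inr c => exact absurd h2 id
    | inr b =>
      have : a = b := h1
      subst this
      exact h2

lemma coStar_antisymm' {x y : T.S (i+1) ⊕ T.S i}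
    (h1 : T.coStar i x y) (h2 : T.coStar i y x) : x = y := by
  cases x with
  | inl a =>
    cases y with
    | inl b => exact congrArg Sum.inl (T.antisymm _ a b h1 h2)
    | inr b => exact absurd h1 id
  | inr a =>
    cases y with
    | inl b => exact absurd h2 id
    | inr b => exact congrArg Sum.inr h1

lemma lvsC_inr (t : T.S (i+1)) :
    T.lvsC i (Sum.inr t) = {Sum.inl t} := by
  ext x
  constructor
  · rintro ⟨t', rfl, h⟩
    have : t' = t := h
    subst this; rfl
  · rintro rfl
    exact ⟨t, rfl, rfl⟩

lemma isGammaOf_inr (t : T.S (i+1)) :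
    T.IsGammaOf i (Sum.inr t) (Sum.inl t) := by
  constructor
  · intro x hx
    rw [lvsC_inr] at hx
    rw [hx]
    exact coStar_refl' T i _
  · intro u hu
    exact hu _ (by rw [lvsC_inr]; rfl)

lemma gamma_unique {p : T.S (i+2) ⊕ T.S (i+1)} {g g' : T.S (i+1) ⊕ T.S i}
    (h : T.IsGammaOf i p g) (h' : T.IsGammaOf i p g') : g = g' :=
  coStar_antisymm' T i (h.2 g' h'.1) (h'.2 g h.1)

/-- Existence of a cover between strictly comparable elements. -/
lemma exists_cover {x y : T.S (i+1) ⊕ T.S i}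
    (hxy : T.coStar i x y) (hne : x ≠ y) :
    ∃ z, T.covC i x z ∧ T.coStar i z y := by
  haveI : Finite (T.S (i+1)) := T.fin _
  haveI : Finite (T.S i) := T.fin _
  haveI : Finite (T.S (i+1) ⊕ T.S i) := Finite.instSum
  set r : (T.S (i+1) ⊕ T.S i) → (T.S (i+1) ⊕ T.S i) → Prop :=
    fun a b => T.coStar i a b ∧ a ≠ b with hr
  haveI : IsTrans _ r := ⟨by
    rintro a b c ⟨h1, h2⟩ ⟨h3, h4⟩
    refine ⟨coStar_trans' T i h1 h3, ?_⟩
    rintro rfl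
    exact h2 (coStar_antisymm' T i h1 h3)⟩
  haveI : IsIrrefl _ r := ⟨by rintro a ⟨-, h⟩; exact h rfl⟩
  have hwf : WellFounded r := Finite.wellFounded_of_trans_of_irrefl r
  obtain ⟨m, hm, hmin⟩ := hwf.has_min
    {z | T.coStar i x z ∧ x ≠ z ∧ T.coStar i z y} ⟨y, hxy, hne, coStar_refl' T i y⟩
  refine ⟨m, ⟨hm.1, hm.2.1, ?_⟩, hm.2.2⟩
  intro z hxz hzm
  by_contra hc
  push_neg at hc
  exact hmin z ⟨hxz, fun e => hc.1 e.symm,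
      coStar_trans' T i hzm hm.2.2⟩ ⟨hzm, fun e => hc.2 e⟩

end Aux

end TreeComplex

/-- Let `(S, σ)` be a tree complex with faces `S*_i = S_{i+1} ◁ S_i`, codomain
`γ(p) = sup(lvs(p)°)` and domain `δ(p) = cvr(lvs(p)°)`.  Then the relation `<⁺`
generated by `γ` and `δ` on `S*_i` (transitive closure of: `∃ r, s ∈ δ(r) ∧ γ(r) = s'`)
coincides with the strict constellation order `<^co`. -/
theorem stmt_18 (T : TreeComplex) (i : ℕ)
    (γ : T.S (i+2) ⊕ T.S (i+1) → T.S (i+1) ⊕ T.S i)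
    (hγ : ∀ p, T.IsGammaOf i p (γ p)) :
    ∀ x y : T.S (i+1) ⊕ T.S i,
      Relation.TransGen (fun s s' => ∃ r, s ∈ T.δStar i r ∧ γ r = s') x y ↔
        (T.coStar i x y ∧ x ≠ y) := by
  -- single edges are strictly increasing
  have edge_strict : ∀ s s' : T.S (i+1) ⊕ T.S i,
      (∃ r, s ∈ T.δStar i r ∧ γ r = s') → T.coStar i s s' ∧ s ≠ s' := by
    rintro s s' ⟨r, ⟨hsn, x, hxlvs, hcov⟩, rfl⟩
    have hxg : T.coStar i x (γ r) := (hγ r).1 x hxlvs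
    have hsx : T.coStar i s x := hcov.1
    refine ⟨T.coStar_trans' i hsx hxg, ?_⟩
    rintro rfl
    exact hcov.2.1 (T.coStar_antisymm' i hsx hxg)
  intro x y
  constructor
  · intro h
    induction h with
    | single h => exact edge_strict _ _ h
    | tail h1 h2 ih =>
      obtain ⟨hb, hbne⟩ := edge_strict _ _ h2
      refine ⟨T.coStar_trans' i ih.1 hb, ?_⟩
      rintro rfl
      exact ih.2 (T.coStar_antisymm' i ih.1 hb)
  · rintro ⟨hxy, hne⟩
    -- well-founded recursion going upwards
    haveI : Finite (T.S (i+1)) := T.fin _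
    haveI : Finite (T.S i) := T.fin _
    haveI : Finite (T.S (i+1) ⊕ T.S i) := Finite.instSum
    set r : (T.S (i+1) ⊕ T.S i) → (T.S (i+1) ⊕ T.S i) → Prop :=
      fun a b => T.coStar i b a ∧ b ≠ a with hr
    haveI : IsTrans _ r := ⟨by
      rintro a b c ⟨h1, h2⟩ ⟨h3, h4⟩
      refine ⟨T.coStar_trans' i h3 h1, ?_⟩
      rintro rfl
      exact h4 (T.coStar_antisymm' i h3 h1)⟩
    haveI : IsIrrefl _ r := ⟨by rintro a ⟨-, h⟩; exact h rfl⟩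
    have hwf : WellFounded r := Finite.wellFounded_of_trans_of_irrefl r
    have main : ∀ x, T.coStar i x y → x ≠ y →
        Relation.TransGen (fun s s' => ∃ p, s ∈ T.δStar i p ∧ γ p = s') x y := by
      intro x
      induction x using hwf.induction with
      | _ x IH =>
      intro hxy hne
      obtain ⟨z, hcov, hzy⟩ := T.exists_cover i hxy hne
      -- z is a circle
      obtain ⟨t, rfl⟩ : ∃ t, z = Sum.inl t := by
        cases z with
        | inl t => exact ⟨t, rfl⟩
        | inr s =>
          exfalso
          cases x with
          | inl a => exact hcov.1
          | inr a => exact hcov.2.1 (congrArg Sum.inr hcov.1)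
      -- the edge x → z via the vertex `inr t`
      have hγt : γ (Sum.inr t) = Sum.inl t :=
        T.gamma_unique i (hγ _) (T.isGammaOf_inr i t)
      have hedge : ∃ p, x ∈ T.δStar i p ∧ γ p = Sum.inl t := by
        refine ⟨Sum.inr t, ⟨?_, Sum.inl t, ?_, hcov⟩, hγt⟩
        · rw [T.lvsC_inr]
          intro hx
          exact hcov.2.1 hx
        · rw [T.lvsC_inr]; rfl
      by_cases hzy' : Sum.inl t = y
      · subst hzy'
        exact Relation.TransGen.single hedge
      · have hrel : r (Sum.inl t) x := ⟨hcov.1, hcov.2.1⟩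
        exact Relation.TransGen.head hedge (IH _ hrel hzy hzy')
    exact main x hxy hne
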